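/- For every n ≥ 1 and every 0 ≤ m ≤ n there is a constant c > 0 such that for every continuously differentiable path γ = (x, y) : [0,1] → ℝⁿ × ℝⁿ whose two endpoints γ(0) and γ(1) each lie in L₀ ∪ L₁, one has |∫₀¹ ⟨x(t), y′(t)⟩ dt| ≤ c·(∫₀¹ ‖γ′(t)‖ dt)². -/

import Mathlib

/-!
Write `γ = (x, y)` and `ℓ` for its length. A linear, norm-nonincreasing image of `γ` that
vanishes at one endpoint stays within `ℓ` of the origin, so `|∫ ⟨x, y'⟩| ≤ ℓ²` as soon as `x`
vanishes at an endpoint; if instead `y` vanishes at both endpoints, integration by parts turns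
`∫ ⟨x, y'⟩` into `-∫ ⟨y, x'⟩`, which is bounded the same way. An endpoint on `L₀` gives the first
case. If both endpoints lie on `L₁`, split `ℝⁿ` orthogonally into the first `m` coordinates and
the others: on the first block `x(0) = 0`, on the second `y(0) = y(1) = 0`, so `c = 2` works.
-/

/-- ℝⁿ × ℝⁿ with the Euclidean (L²) norm. -/
noncomputable abbrev E2 (n : ℕ) :=
  WithLp 2 (EuclideanSpace ℝ (Fin n) × EuclideanSpace ℝ (Fin n))

/-- The Lagrangian subspace `L₀ = {(x, y) : x = 0}`. -/
def L0 (n : ℕ) : Set (E2 n) :=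
  {p | (WithLp.equiv 2 _ p).1 = 0}

/-- The Lagrangian subspace `L₁ = {(x, y) : xⱼ = 0 for 1 ≤ j ≤ m, yⱼ = 0 for m < j ≤ n}`. -/
def L1 (n m : ℕ) : Set (E2 n) :=
  {p | (∀ j : Fin n, (j : ℕ) < m → (WithLp.equiv 2 _ p).1 j = 0) ∧
       (∀ j : Fin n, m ≤ (j : ℕ) → (WithLp.equiv 2 _ p).2 j = 0)}

open Set MeasureTheory intervalIntegral

open scoped RealInnerProductSpace

section Paths

variable {F H : Type*} [NormedAddCommGroup F] [NormedSpace ℝ F]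
  [NormedAddCommGroup H] [InnerProductSpace ℝ H] {γ γ' : ℝ → F}

theorem integral_eq_sub_of_hasDerivWithinAt_Icc [CompleteSpace F] {f f' : ℝ → F} {a b : ℝ}
    (hab : a ≤ b) (hf : ∀ t ∈ Icc a b, HasDerivWithinAt f (f' t) (Icc a b) t)
    (hf' : IntervalIntegrable f' volume a b) :
    ∫ t in a..b, f' t = f b - f a :=
  integral_eq_sub_of_hasDerivAt_of_le hab (fun t ht ↦ (hf t ht).continuousWithinAt)
    (fun t ht ↦ (hf t (Ioo_subset_Icc_self ht)).hasDerivAt (Icc_mem_nhds ht.1 ht.2)) hf'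

theorem norm_sub_le_integral_norm_deriv [CompleteSpace F]
    (hd : ∀ t ∈ Icc (0 : ℝ) 1, HasDerivWithinAt γ (γ' t) (Icc 0 1) t)
    (hc : ContinuousOn γ' (Icc 0 1)) {a b : ℝ} (ha : 0 ≤ a) (hab : a ≤ b) (hb : b ≤ 1) :
    ‖γ b - γ a‖ ≤ ∫ t in (0 : ℝ)..1, ‖γ' t‖ := by
  have hsub : Icc a b ⊆ Icc 0 1 := Icc_subset_Icc ha hb
  have hftc : ∫ t in a..b, γ' t = γ b - γ a :=
    integral_eq_sub_of_hasDerivWithinAt_Icc hab (fun t ht ↦ (hd t (hsub ht)).mono hsub)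
      ((hc.mono hsub).intervalIntegrable_of_Icc hab)
  calc ‖γ b - γ a‖ ≤ ∫ t in a..b, ‖γ' t‖ := hftc ▸ norm_integral_le_integral_norm hab
    _ ≤ ∫ t in (0 : ℝ)..1, ‖γ' t‖ :=
      integral_mono_interval ha hab hb (ae_of_all _ fun _ ↦ norm_nonneg _)
        (hc.norm.intervalIntegrable_of_Icc zero_le_one)

theorem norm_map_le_integral_norm_deriv [CompleteSpace F]
    (hd : ∀ t ∈ Icc (0 : ℝ) 1, HasDerivWithinAt γ (γ' t) (Icc 0 1) t)
    (hc : ContinuousOn γ' (Icc 0 1)) {A : F →L[ℝ] H} (hA : ∀ p, ‖A p‖ ≤ ‖p‖)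
    (hγA : A (γ 0) = 0 ∨ A (γ 1) = 0) {t : ℝ} (ht : t ∈ Icc (0 : ℝ) 1) :
    ‖A (γ t)‖ ≤ ∫ t in (0 : ℝ)..1, ‖γ' t‖ := by
  rcases hγA with h0 | h1
  · calc ‖A (γ t)‖ = ‖A (γ t - γ 0)‖ := by rw [map_sub, h0, sub_zero]
      _ ≤ ‖γ t - γ 0‖ := hA _
      _ ≤ _ := norm_sub_le_integral_norm_deriv hd hc le_rfl ht.1 ht.2
  · calc ‖A (γ t)‖ = ‖A (γ 1 - γ t)‖ := by rw [map_sub, h1, zero_sub, norm_neg]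
      _ ≤ ‖γ 1 - γ t‖ := hA _
      _ ≤ _ := norm_sub_le_integral_norm_deriv hd hc ht.1 ht.2 le_rfl

theorem abs_integral_inner_le_mul_integral {u v : ℝ → H} {g : ℝ → ℝ} {C : ℝ}
    (hg : IntervalIntegrable g volume 0 1) (hu : ∀ t ∈ Icc (0 : ℝ) 1, ‖u t‖ ≤ C)
    (hv : ∀ t ∈ Icc (0 : ℝ) 1, ‖v t‖ ≤ g t) :
    |∫ t in (0 : ℝ)..1, ⟪u t, v t⟫| ≤ C * ∫ t in (0 : ℝ)..1, g t := by
  rw [← Real.norm_eq_abs, ← intervalIntegral.integral_const_mul]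
  refine norm_integral_le_of_norm_le zero_le_one (ae_of_all _ fun t ht ↦ ?_) (hg.const_mul C)
  have ht : t ∈ Icc (0 : ℝ) 1 := Ioc_subset_Icc_self ht
  calc ‖⟪u t, v t⟫‖ ≤ ‖u t‖ * ‖v t‖ := norm_inner_le_norm _ _
    _ ≤ C * g t := mul_le_mul (hu t ht) (hv t ht) (norm_nonneg _) ((norm_nonneg _).trans (hu t ht))

variable {A B : F →L[ℝ] H}

theorem intervalIntegrable_inner_map_map
    (hd : ∀ t ∈ Icc (0 : ℝ) 1, HasDerivWithinAt γ (γ' t) (Icc 0 1) t)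
    (hc : ContinuousOn γ' (Icc 0 1)) :
    IntervalIntegrable (fun t ↦ ⟪A (γ t), B (γ' t)⟫) volume 0 1 :=
  ((A.continuous.comp_continuousOn fun t ht ↦ (hd t ht).continuousWithinAt).inner
    (B.continuous.comp_continuousOn hc)).intervalIntegrable_of_Icc zero_le_one

theorem abs_integral_inner_le_sq_of_map_eq_zero_left [CompleteSpace F]
    (hd : ∀ t ∈ Icc (0 : ℝ) 1, HasDerivWithinAt γ (γ' t) (Icc 0 1) t)
    (hc : ContinuousOn γ' (Icc 0 1)) (hA : ∀ p, ‖A p‖ ≤ ‖p‖) (hB : ∀ p, ‖B p‖ ≤ ‖p‖)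
    (hγA : A (γ 0) = 0 ∨ A (γ 1) = 0) :
    |∫ t in (0 : ℝ)..1, ⟪A (γ t), B (γ' t)⟫| ≤ (∫ t in (0 : ℝ)..1, ‖γ' t‖) ^ 2 :=
  sq (∫ t in (0 : ℝ)..1, ‖γ' t‖) ▸ abs_integral_inner_le_mul_integral
    (hc.norm.intervalIntegrable_of_Icc zero_le_one)
    (fun _ ↦ norm_map_le_integral_norm_deriv hd hc hA hγA) (fun t _ ↦ hB (γ' t))

theorem integral_inner_map_deriv_eq_neg
    (hd : ∀ t ∈ Icc (0 : ℝ) 1, HasDerivWithinAt γ (γ' t) (Icc 0 1) t)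
    (hc : ContinuousOn γ' (Icc 0 1)) (hγB₀ : B (γ 0) = 0) (hγB₁ : B (γ 1) = 0) :
    ∫ t in (0 : ℝ)..1, ⟪A (γ t), B (γ' t)⟫ = -∫ t in (0 : ℝ)..1, ⟪B (γ t), A (γ' t)⟫ := by
  have hleibniz : ∀ t ∈ Icc (0 : ℝ) 1, HasDerivWithinAt (fun s ↦ ⟪A (γ s), B (γ s)⟫)
      (⟪A (γ t), B (γ' t)⟫ + ⟪B (γ t), A (γ' t)⟫) (Icc 0 1) t := fun t ht ↦ by
    simpa only [Function.comp_apply, real_inner_comm (B (γ t))] using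
      ((A.hasFDerivAt.comp_hasDerivWithinAt t (hd t ht)).inner ℝ
        (B.hasFDerivAt.comp_hasDerivWithinAt t (hd t ht)))
  have hsum := integral_eq_sub_of_hasDerivWithinAt_Icc zero_le_one hleibniz
    ((intervalIntegrable_inner_map_map hd hc).add (intervalIntegrable_inner_map_map hd hc))
  rw [integral_add (intervalIntegrable_inner_map_map hd hc)
    (intervalIntegrable_inner_map_map hd hc), hγB₀, hγB₁] at hsum
  simp only [inner_zero_right, sub_zero] at hsum
  linarith

theorem abs_integral_inner_le_sq_of_map_eq_zero_right [CompleteSpace F]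
    (hd : ∀ t ∈ Icc (0 : ℝ) 1, HasDerivWithinAt γ (γ' t) (Icc 0 1) t)
    (hc : ContinuousOn γ' (Icc 0 1)) (hA : ∀ p, ‖A p‖ ≤ ‖p‖) (hB : ∀ p, ‖B p‖ ≤ ‖p‖)
    (hγB₀ : B (γ 0) = 0) (hγB₁ : B (γ 1) = 0) :
    |∫ t in (0 : ℝ)..1, ⟪A (γ t), B (γ' t)⟫| ≤ (∫ t in (0 : ℝ)..1, ‖γ' t‖) ^ 2 := by
  rw [integral_inner_map_deriv_eq_neg hd hc hγB₀ hγB₁, abs_neg]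
  exact abs_integral_inner_le_sq_of_map_eq_zero_left hd hc hB hA (Or.inl hγB₀)

theorem abs_integral_inner_le_two_mul_sq_of_orthogonal_split [CompleteSpace F] {P Q : H →L[ℝ] H}
    (hd : ∀ t ∈ Icc (0 : ℝ) 1, HasDerivWithinAt γ (γ' t) (Icc 0 1) t)
    (hc : ContinuousOn γ' (Icc 0 1)) (hA : ∀ p, ‖A p‖ ≤ ‖p‖) (hB : ∀ p, ‖B p‖ ≤ ‖p‖)
    (hP : ∀ z, ‖P z‖ ≤ ‖z‖) (hQ : ∀ z, ‖Q z‖ ≤ ‖z‖) (hPQ : ∀ z w, ⟪z, w⟫ = ⟪P z, P w⟫ + ⟪Q z, Q w⟫)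
    (hγA : P (A (γ 0)) = 0) (hγB₀ : Q (B (γ 0)) = 0) (hγB₁ : Q (B (γ 1)) = 0) :
    |∫ t in (0 : ℝ)..1, ⟪A (γ t), B (γ' t)⟫| ≤ 2 * (∫ t in (0 : ℝ)..1, ‖γ' t‖) ^ 2 := by
  have hcomp {T : H →L[ℝ] H} {C : F →L[ℝ] H} (hT : ∀ z, ‖T z‖ ≤ ‖z‖) (hC : ∀ p, ‖C p‖ ≤ ‖p‖)
      (p : F) : ‖(T ∘L C) p‖ ≤ ‖p‖ :=
    (hT (C p)).trans (hC p)
  have hPint : IntervalIntegrable (fun t ↦ ⟪P (A (γ t)), P (B (γ' t))⟫) volume 0 1 :=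
    intervalIntegrable_inner_map_map (A := P ∘L A) (B := P ∘L B) hd hc
  have hQint : IntervalIntegrable (fun t ↦ ⟪Q (A (γ t)), Q (B (γ' t))⟫) volume 0 1 :=
    intervalIntegrable_inner_map_map (A := Q ∘L A) (B := Q ∘L B) hd hc
  rw [integral_congr fun t _ ↦ hPQ _ _, integral_add hPint hQint, two_mul]
  exact (abs_add_le _ _).trans (add_le_add
    (abs_integral_inner_le_sq_of_map_eq_zero_left hd hc (hcomp hP hA) (hcomp hP hB) (.inl hγA))
    (abs_integral_inner_le_sq_of_map_eq_zero_right hd hc (hcomp hQ hA) (hcomp hQ hB) hγB₀ hγB₁))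

end Paths

section RestrictCoords

variable {ι : Type*} [Fintype ι]

noncomputable def restrictCoords (s : Set ι) : EuclideanSpace ℝ ι →L[ℝ] EuclideanSpace ℝ ι :=
  LinearMap.toContinuousLinearMap
    { toFun z := WithLp.toLp 2 (s.indicator z)
      map_add' z w := by ext i; by_cases hi : i ∈ s <;> simp [hi]
      map_smul' c z := by ext i; by_cases hi : i ∈ s <;> simp [hi] }

@[simp]
theorem restrictCoords_apply (s : Set ι) (z : EuclideanSpace ℝ ι) (i : ι) :
    restrictCoords s z i = s.indicator z i :=
  rfl

theorem norm_restrictCoords_le (s : Set ι) (z : EuclideanSpace ℝ ι) :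
    ‖restrictCoords s z‖ ≤ ‖z‖ := by
  simp only [EuclideanSpace.norm_eq, restrictCoords_apply]
  gcongr with i
  exact norm_indicator_le_norm_self _ _

theorem inner_eq_inner_restrictCoords_add_inner_restrictCoords_compl (s : Set ι)
    (z w : EuclideanSpace ℝ ι) :
    ⟪z, w⟫ = ⟪restrictCoords s z, restrictCoords s w⟫ +
      ⟪restrictCoords sᶜ z, restrictCoords sᶜ w⟫ := by
  simp only [PiLp.inner_apply, ← Finset.sum_add_distrib]
  refine Finset.sum_congr rfl fun i _ ↦ ?_
  by_cases hi : i ∈ s <;> simp [hi]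

theorem restrictCoords_eq_zero {s : Set ι} {z : EuclideanSpace ℝ ι} (hz : ∀ i ∈ s, z i = 0) :
    restrictCoords s z = 0 := by
  ext i
  by_cases hi : i ∈ s <;> simp [hi, hz]

end RestrictCoords

set_option synthInstance.maxHeartbeats 400000
set_option maxHeartbeats 4000000

theorem path_isoperimetric_inequality_general (n m : ℕ) :
    ∃ c : ℝ, 0 < c ∧
      ∀ γ γ' : ℝ → E2 n,
        (∀ t ∈ Set.Icc (0:ℝ) 1, HasDerivWithinAt γ (γ' t) (Set.Icc 0 1) t) →
        ContinuousOn γ' (Set.Icc 0 1) →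
        γ 0 ∈ L0 n ∪ L1 n m → γ 1 ∈ L0 n ∪ L1 n m →
        |∫ t in (0:ℝ)..1,
            (inner ℝ ((WithLp.equiv 2 _ (γ t)).1) ((WithLp.equiv 2 _ (γ' t)).2) : ℝ)| ≤
          c * (∫ t in (0:ℝ)..1, ‖γ' t‖) ^ 2 := by
  refine ⟨2, two_pos, fun γ γ' hd hc h0 h1 ↦ ?_⟩
  let x := WithLp.fstL 2 ℝ (EuclideanSpace ℝ (Fin n)) (EuclideanSpace ℝ (Fin n))
  let y := WithLp.sndL 2 ℝ (EuclideanSpace ℝ (Fin n)) (EuclideanSpace ℝ (Fin n))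
  -- Unifying later lemmas with the statement's form of the integrand is very slow.
  change |∫ t in (0:ℝ)..1, ⟪x (γ t), y (γ' t)⟫| ≤ _
  have hx : ∀ p, ‖x p‖ ≤ ‖p‖ := WithLp.norm_fst_le _
  have hy : ∀ p, ‖y p‖ ≤ ‖p‖ := WithLp.norm_snd_le _
  have of_mem_L0 (h : x (γ 0) = 0 ∨ x (γ 1) = 0) :=
    (abs_integral_inner_le_sq_of_map_eq_zero_left hd hc hx hy h).trans
      (le_mul_of_one_le_left (sq_nonneg _) one_le_two)
  rcases h0 with h0 | h0
  · exact of_mem_L0 (.inl h0)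
  rcases h1 with h1 | h1
  · exact of_mem_L0 (.inr h1)
  let s : Set (Fin n) := {j | (j : ℕ) < m}
  have hx₀ : restrictCoords s (x (γ 0)) = 0 := restrictCoords_eq_zero h0.1
  have hy₀ : restrictCoords sᶜ (y (γ 0)) = 0 :=
    restrictCoords_eq_zero fun j hj ↦ h0.2 j (not_lt.mp hj)
  have hy₁ : restrictCoords sᶜ (y (γ 1)) = 0 :=
    restrictCoords_eq_zero fun j hj ↦ h1.2 j (not_lt.mp hj)
  exact abs_integral_inner_le_two_mul_sq_of_orthogonal_split hd hc hx hy
    (norm_restrictCoords_le s) (norm_restrictCoords_le sᶜ)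
    (inner_eq_inner_restrictCoords_add_inner_restrictCoords_compl s) hx₀ hy₀ hy₁

/-- Isoperimetric inequality for C¹ paths with endpoints on `L₀ ∪ L₁`:
the symplectic action `∫ ⟨x, y'⟩` is bounded by a constant (depending only on `n`, `m`)
times the square of the length. -/
theorem path_isoperimetric_inequality (n m : ℕ) (hn : 1 ≤ n) (hm : m ≤ n) :
    ∃ c : ℝ, 0 < c ∧
      ∀ γ γ' : ℝ → E2 n,
        (∀ t ∈ Set.Icc (0:ℝ) 1, HasDerivWithinAt γ (γ' t) (Set.Icc 0 1) t) →
        ContinuousOn γ' (Set.Icc 0 1) →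
        γ 0 ∈ L0 n ∪ L1 n m → γ 1 ∈ L0 n ∪ L1 n m →
        |∫ t in (0:ℝ)..1,
            (inner ℝ ((WithLp.equiv 2 _ (γ t)).1) ((WithLp.equiv 2 _ (γ' t)).2) : ℝ)| ≤
          c * (∫ t in (0:ℝ)..1, ‖γ' t‖) ^ 2 :=
  path_isoperimetric_inequality_general n m
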